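/- (Dudley's entropy bound.) There exists a universal constant K > 0 with the following property. Let (G(t))_{t∈T} be a centered Gaussian process over a set T, let ρ(t₁,t₂) = (𝐄[(G(t₁) − G(t₂))²])^{1/2} be the associated pseudometric, and assume (T, ρ) is compact and that G has almost surely continuous sample paths with respect to ρ. Let 𝒩(η) be the smallest number of closed ρ-balls of radius η needed to cover T. If ∫_0^∞ √(log 𝒩(η)) dη < ∞, then 𝐄[sup_{t ∈ T} G(t)] ≤ K ∫_0^∞ √(log 𝒩(η)) dη. -/

import Mathlib

open MeasureTheory ProbabilityTheory Filter

/-- A family of real random variables is a centered Gaussian process if each variable is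
measurable and every finite linear combination is a centered Gaussian random variable. -/
def IsCenteredGaussianProcess {Ω : Type*} [MeasurableSpace Ω] (P : Measure Ω)
    {T : Type*} (G : T → Ω → ℝ) : Prop :=
  (∀ t, Measurable (G t)) ∧
    ∀ (n : ℕ) (t : Fin n → T) (a : Fin n → ℝ),
      ∃ v : NNReal, Measure.map (fun ω => ∑ i, a i * G (t i) ω) P = gaussianReal 0 v

/-- The metric entropy `𝒩(η)`: the smallest number of closed `ρ`-balls of radius `η`
needed to cover `T` (`∞` if no finite cover exists). -/
noncomputable def metricEntropy {T : Type*} (ρ : T → T → ℝ) (η : ℝ) : ℕ∞ :=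
  sInf {N : ℕ∞ | ∃ n : ℕ, N = (n : ℕ∞) ∧
    ∃ c : Fin n → T, ∀ x : T, ∃ i, ρ x (c i) ≤ η}

open MeasureTheory ProbabilityTheory Filter Real Set
open scoped NNReal ENNReal Topology

namespace DudleyAux

lemma integrable_dirac' {α : Type*} [MeasurableSpace α] [MeasurableSingletonClass α]
    (f : α → ℝ) (a : α) : Integrable f (Measure.dirac a) :=
  (integrable_const (f a)).congr (ae_eq_dirac f).symm

lemma gaussianReal_eq_withDensity (v : ℝ≥0) (hv : v ≠ 0) (μ : ℝ) :
    gaussianReal μ v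
      = MeasureTheory.volume.withDensity
          (fun x => ((gaussianPDFReal μ v x).toNNReal : ℝ≥0∞)) := by
  rw [gaussianReal_of_var_ne_zero μ hv]
  rfl

lemma pdf_mul_exp (v : ℝ≥0) (hv : v ≠ 0) (t x : ℝ) :
    gaussianPDFReal 0 v x * rexp (t * x)
      = rexp (t ^ 2 * v / 2) * gaussianPDFReal (t * v) v x := by
  have hv' : (v : ℝ) ≠ 0 := by exact_mod_cast hv
  have h1 : -(x - 0) ^ 2 / (2 * (v:ℝ)) + t * x
      = t ^ 2 * (v:ℝ) / 2 + -(x - t * (v:ℝ)) ^ 2 / (2 * (v:ℝ)) := by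
    field_simp
    ring
  simp only [gaussianPDFReal]
  rw [mul_assoc, ← Real.exp_add, h1, Real.exp_add]
  ring

lemma smul_pdf_eq (v : ℝ≥0) (hv : v ≠ 0) (t : ℝ) :
    (fun x => (gaussianPDFReal 0 v x).toNNReal • rexp (t * x))
      = fun x => rexp (t ^ 2 * v / 2) * gaussianPDFReal (t * v) v x := by
  funext x
  rw [NNReal.smul_def, smul_eq_mul, Real.coe_toNNReal _ (gaussianPDFReal_nonneg 0 v x),
    pdf_mul_exp v hv]

lemma integrable_exp_mul_gaussian (v : ℝ≥0) (t : ℝ) :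
    Integrable (fun x => rexp (t * x)) (gaussianReal 0 v) := by
  rcases eq_or_ne v 0 with rfl | hv
  · rw [gaussianReal_zero_var]
    exact integrable_dirac' _ _
  · rw [gaussianReal_eq_withDensity v hv,
      integrable_withDensity_iff_integrable_smul
        ((measurable_gaussianPDFReal 0 v).real_toNNReal), smul_pdf_eq v hv]
    exact (integrable_gaussianPDFReal (t * v) v).const_mul _

lemma integral_exp_mul_gaussian (v : ℝ≥0) (t : ℝ) :
    ∫ x, rexp (t * x) ∂(gaussianReal 0 v) = rexp (t ^ 2 * v / 2) := by
  rcases eq_or_ne v 0 with rfl | hv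
  · rw [gaussianReal_zero_var, integral_dirac]
    simp
  · rw [gaussianReal_eq_withDensity v hv,
      integral_withDensity_eq_integral_smul ((measurable_gaussianPDFReal 0 v).real_toNNReal)]
    rw [smul_pdf_eq v hv t]
    rw [integral_const_mul, integral_gaussianPDFReal_eq_one _ hv, mul_one]

end DudleyAux


namespace DudleyAux2

-- |x| ≤ exp x + exp (-x)
lemma abs_le_exp_add_exp (x : ℝ) : |x| ≤ rexp x + rexp (-x) := by
  rcases abs_cases x with ⟨h, _⟩ | ⟨h, _⟩ <;> rw [h] <;>
    nlinarith [Real.add_one_le_exp x, Real.add_one_le_exp (-x), Real.exp_pos x,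
      Real.exp_pos (-x)]

lemma sq_le_exp_add_exp (x : ℝ) : x ^ 2 ≤ 4 * (rexp x + rexp (-x)) := by
  have h1 : 1 + |x| / 2 ≤ rexp (|x| / 2) := Real.add_one_le_exp _ |>.trans_eq' (by ring_nf)
  have h2 : (1 + |x| / 2) ^ 2 ≤ rexp (|x|) := by
    have := pow_le_pow_left₀ (by positivity : (0:ℝ) ≤ 1 + |x| / 2) h1 2
    refine this.trans_eq ?_
    rw [sq, ← Real.exp_add]
    ring_nf
  have h3 : rexp |x| ≤ rexp x + rexp (-x) := by
    rcases abs_cases x with ⟨h, _⟩ | ⟨h, _⟩ <;> rw [h] <;>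
      nlinarith [Real.exp_pos x, Real.exp_pos (-x)]
  have h4 : x ^ 2 ≤ 4 * rexp |x| := by nlinarith [abs_nonneg x, sq_abs x]
  linarith

lemma integrable_id_gaussian (v : ℝ≥0) :
    Integrable (fun x : ℝ => x) (gaussianReal 0 v) := by
  have h := (DudleyAux.integrable_exp_mul_gaussian v 1).add
    (DudleyAux.integrable_exp_mul_gaussian v (-1))
  refine h.mono' measurable_id.aestronglyMeasurable ?_
  filter_upwards with x
  simpa using abs_le_exp_add_exp x

lemma integrable_sq_gaussian (v : ℝ≥0) :
    Integrable (fun x : ℝ => x ^ 2) (gaussianReal 0 v) := by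
  have h := ((DudleyAux.integrable_exp_mul_gaussian v 1).add
    (DudleyAux.integrable_exp_mul_gaussian v (-1))).const_mul (4 : ℝ)
  refine h.mono' (measurable_id.pow_const 2).aestronglyMeasurable ?_
  filter_upwards with x
  rw [Real.norm_eq_abs, abs_of_nonneg (sq_nonneg x)]
  simpa [mul_add] using sq_le_exp_add_exp x

lemma integral_id_gaussian (v : ℝ≥0) :
    ∫ x, x ∂(gaussianReal 0 v) = 0 := by
  have hmap : Measure.map (fun x : ℝ => (-1 : ℝ) * x) (gaussianReal 0 v)
      = gaussianReal 0 v := by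
    rw [gaussianReal_map_const_mul]
    norm_num
  have h1 : ∫ x, x ∂(gaussianReal 0 v) = ∫ x, (-1 : ℝ) * x ∂(gaussianReal 0 v) := by
    nth_rewrite 1 [← hmap]
    rw [integral_map (by fun_prop : AEMeasurable (fun x : ℝ => (-1:ℝ) * x) (gaussianReal 0 v))
      measurable_id'.aestronglyMeasurable]
  have := integrable_id_gaussian v
  rw [integral_const_mul] at h1
  linarith [h1]

lemma integrable_sq_mul_exp {b : ℝ} (hb : 0 < b) :
    Integrable (fun x : ℝ => x ^ 2 * rexp (-b * x ^ 2)) := by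
  have := integrable_rpow_mul_exp_neg_mul_sq hb (s := 2) (by norm_num)
  refine this.congr ?_
  filter_upwards with x
  rw [show ((2:ℝ)) = ((2:ℕ):ℝ) by norm_num, Real.rpow_natCast]

lemma integral_sq_mul_exp {b : ℝ} (hb : 0 < b) :
    ∫ x : ℝ, x ^ 2 * rexp (-b * x ^ 2) = (2 * b)⁻¹ * Real.sqrt (π / b) := by
  set f : ℝ → ℝ := fun x => x * rexp (-b * x ^ 2) with hf
  set f' : ℝ → ℝ := fun x => rexp (-b * x ^ 2) - 2 * b * (x ^ 2 * rexp (-b * x ^ 2)) with hf'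
  have hderiv : ∀ x : ℝ, HasDerivAt f (f' x) x := by
    intro x
    have h1 : HasDerivAt (fun x : ℝ => -b * x ^ 2) (-b * (2 * x)) x := by
      simpa using ((hasDerivAt_pow 2 x).const_mul (-b))
    have h2 := (hasDerivAt_id' x).mul h1.exp
    refine h2.congr_deriv ?_
    simp [hf']
    ring
  have hint : Integrable f' := by
    exact (integrable_exp_neg_mul_sq hb).sub ((integrable_sq_mul_exp hb).const_mul _)
  have htop : Tendsto f atTop (𝓝 0) := by
    have h0 := tendsto_rpow_abs_mul_exp_neg_mul_sq_cocompact hb 1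
    have h0' : Tendsto (fun x : ℝ => |x| ^ (1:ℝ) * rexp (-b * x ^ 2)) atTop (𝓝 0) := by
      refine h0.mono_left ?_
      rw [cocompact_eq_atBot_atTop]
      exact le_sup_right
    refine squeeze_zero_norm (fun x => ?_) h0'
    rw [Real.norm_eq_abs, abs_mul, abs_of_nonneg (Real.exp_pos _).le, Real.rpow_one]
  have hbot : Tendsto f atBot (𝓝 0) := by
    have h0 := tendsto_rpow_abs_mul_exp_neg_mul_sq_cocompact hb 1
    have h0' : Tendsto (fun x : ℝ => |x| ^ (1:ℝ) * rexp (-b * x ^ 2)) atBot (𝓝 0) := by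
      refine h0.mono_left ?_
      rw [cocompact_eq_atBot_atTop]
      exact le_sup_left
    refine squeeze_zero_norm (fun x => ?_) h0'
    rw [Real.norm_eq_abs, abs_mul, abs_of_nonneg (Real.exp_pos _).le, Real.rpow_one]
  have hIoi : ∫ x in Ioi (0:ℝ), f' x = 0 - f 0 :=
    integral_Ioi_of_hasDerivAt_of_tendsto' (fun x _ => hderiv x) hint.integrableOn htop
  have hIic : ∫ x in Iic (0:ℝ), f' x = f 0 - 0 :=
    integral_Iic_of_hasDerivAt_of_tendsto' (fun x _ => hderiv x) hint.integrableOn hbot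
  have htot : ∫ x : ℝ, f' x = 0 := by
    rw [← intervalIntegral.integral_Iic_add_Ioi (f := f') (b := (0:ℝ)) hint.integrableOn hint.integrableOn, hIoi, hIic]
    ring
  rw [hf'] at htot
  rw [integral_sub (integrable_exp_neg_mul_sq hb)
    ((integrable_sq_mul_exp hb).const_mul _), integral_gaussian,
    integral_const_mul] at htot
  have h2b : (2 * b) ≠ 0 := by positivity
  field_simp at htot ⊢
  linarith

lemma integral_sq_gaussian (v : ℝ≥0) :
    ∫ x, x ^ 2 ∂(gaussianReal 0 v) = v := by
  rcases eq_or_ne v 0 with rfl | hv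
  · rw [gaussianReal_zero_var, integral_dirac]
    simp
  · have hvpos : (0:ℝ) < v := lt_of_le_of_ne v.coe_nonneg (by exact_mod_cast hv.symm)
    set b : ℝ := (2 * (v:ℝ))⁻¹ with hbdef
    have hb : 0 < b := by positivity
    rw [DudleyAux.gaussianReal_eq_withDensity v hv,
      integral_withDensity_eq_integral_smul ((measurable_gaussianPDFReal 0 v).real_toNNReal)]
    have hpt : (fun x : ℝ => (gaussianPDFReal 0 v x).toNNReal • x ^ 2)
        = fun x : ℝ => (Real.sqrt (2 * π * v))⁻¹ * (x ^ 2 * rexp (-b * x ^ 2)) := by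
      funext x
      rw [NNReal.smul_def, smul_eq_mul, Real.coe_toNNReal _ (gaussianPDFReal_nonneg 0 v x),
        gaussianPDFReal]
      have : -(x - 0) ^ 2 / (2 * (v:ℝ)) = -b * x ^ 2 := by
        rw [hbdef]
        field_simp
        ring
      rw [this]
      ring
    rw [hpt, integral_const_mul, integral_sq_mul_exp hb]
    have h1 : π / b = 2 * π * (v:ℝ) := by
      rw [hbdef]
      field_simp
    have h2 : (2 * b)⁻¹ = (v:ℝ) := by
      rw [hbdef]
      field_simp
    rw [h1, h2]
    have h3 : Real.sqrt (2 * π * v) ≠ 0 := by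
      refine ne_of_gt (Real.sqrt_pos.mpr (by positivity))
    field_simp

end DudleyAux2

namespace DudleyAux3

variable {Ω : Type} [MeasurableSpace Ω] {P : Measure Ω} [IsProbabilityMeasure P]
  {ι : Type} {Q : Finset ι} (hQ : Q.Nonempty) {X : ι → Ω → ℝ}

lemma integrable_of_map_gaussian {Y : Ω → ℝ} (hm : Measurable Y) {v : ℝ≥0}
    (hg : Measure.map Y P = gaussianReal 0 v) : Integrable Y P := by
  have h := DudleyAux2.integrable_id_gaussian v
  rw [← hg, integrable_map_measure measurable_id'.aestronglyMeasurable hm.aemeasurable] at h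
  exact h

lemma integral_of_map_gaussian {Y : Ω → ℝ} (hm : Measurable Y) {v : ℝ≥0}
    (hg : Measure.map Y P = gaussianReal 0 v) : ∫ ω, Y ω ∂P = 0 := by
  have h := integral_map (μ := P) (φ := Y) hm.aemeasurable
    (f := fun y : ℝ => y) measurable_id'.aestronglyMeasurable
  rw [hg, DudleyAux2.integral_id_gaussian] at h
  exact h.symm

lemma integrable_exp_of_map_gaussian {Y : Ω → ℝ} (hm : Measurable Y) {v : ℝ≥0}
    (hg : Measure.map Y P = gaussianReal 0 v) (c : ℝ) :
    Integrable (fun ω => rexp (c * Y ω)) P := by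
  have h := DudleyAux.integrable_exp_mul_gaussian v c
  rw [← hg, integrable_map_measure
    ((measurable_id'.const_mul c).exp).aestronglyMeasurable
    hm.aemeasurable] at h
  exact h

lemma integral_exp_of_map_gaussian {Y : Ω → ℝ} (hm : Measurable Y) {v : ℝ≥0}
    (hg : Measure.map Y P = gaussianReal 0 v) (c : ℝ) :
    ∫ ω, rexp (c * Y ω) ∂P = rexp (c ^ 2 * v / 2) := by
  have h := integral_map (μ := P) (φ := Y) hm.aemeasurable (f := fun y : ℝ => rexp (c * y))
    ((measurable_id'.const_mul c).exp).aestronglyMeasurable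
  rw [hg, DudleyAux.integral_exp_mul_gaussian] at h
  exact h.symm

lemma sup'_integrable (hm : ∀ i ∈ Q, Measurable (X i))
    (hint : ∀ i ∈ Q, Integrable (X i) P) :
    Integrable (fun ω => Q.sup' hQ fun i => X i ω) P := by
  have hmeas : Measurable (fun ω => Q.sup' hQ fun i => X i ω) := by
    have := Finset.measurable_sup' hQ hm
    convert this using 1
    funext ω
    rw [Finset.sup'_apply]
  refine (integrable_finset_sum Q (fun i hi => (hint i hi).abs)).mono'
    hmeas.aestronglyMeasurable ?_
  filter_upwards with ω
  rw [Real.norm_eq_abs, abs_le]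
  obtain ⟨i₀, hi₀⟩ := id hQ
  constructor
  · have h1 : |X i₀ ω| ≤ ∑ i ∈ Q, |X i ω| :=
      Finset.single_le_sum (f := fun i => |X i ω|) (fun j _ => abs_nonneg _) hi₀
    have h2 : X i₀ ω ≤ Q.sup' hQ fun i => X i ω :=
      Finset.le_sup' (fun i => X i ω) hi₀
    have h3 := neg_abs_le (X i₀ ω)
    linarith
  · refine Finset.sup'_le _ _ fun i hi => ?_
    have h1 : |X i ω| ≤ ∑ i ∈ Q, |X i ω| :=
      Finset.single_le_sum (f := fun i => |X i ω|) (fun j _ => abs_nonneg _) hi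
    linarith [le_abs_self (X i ω)]

lemma expectation_sup'_le (hm : ∀ i ∈ Q, Measurable (X i))
    (v : ι → ℝ≥0) (hg : ∀ i ∈ Q, Measure.map (X i) P = gaussianReal 0 (v i))
    (σ : ℝ) (hσ : 0 ≤ σ) (hv : ∀ i ∈ Q, (v i : ℝ) ≤ σ ^ 2) :
    ∫ ω, Q.sup' hQ (fun i => X i ω) ∂P ≤ σ * Real.sqrt (2 * Real.log Q.card) := by
  have hXint : ∀ i ∈ Q, Integrable (X i) P :=
    fun i hi => integrable_of_map_gaussian (hm i hi) (hg i hi)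
  have hMmeas : Measurable (fun ω => Q.sup' hQ fun i => X i ω) := by
    have := Finset.measurable_sup' hQ hm
    convert this using 1
    funext ω
    rw [Finset.sup'_apply]
  have hMint := sup'_integrable hQ hm hXint
  set M : Ω → ℝ := fun ω => Q.sup' hQ fun i => X i ω with hM
  rcases eq_or_lt_of_le hσ with hσ0 | hσpos
  · -- σ = 0 : all variables vanish a.s.
    have hvz : ∀ i ∈ Q, v i = 0 := by
      intro i hi
      have := hv i hi
      rw [← hσ0] at this
      norm_num at this
      exact_mod_cast le_antisymm (by exact_mod_cast this) (zero_le)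
    have hz : ∀ i ∈ Q, X i =ᵐ[P] 0 := by
      intro i hi
      have hmap : Measure.map (X i) P = Measure.dirac 0 := by
        rw [hg i hi, hvz i hi, gaussianReal_zero_var]
      rw [Filter.EventuallyEq, ae_iff]
      have : {ω | ¬ X i ω = (0 : Ω → ℝ) ω} = X i ⁻¹' {(0:ℝ)}ᶜ := by
        ext ω; simp
      rw [this, ← Measure.map_apply (hm i hi) (measurableSet_singleton (0:ℝ)).compl, hmap,
        Measure.dirac_apply' _ (measurableSet_singleton (0:ℝ)).compl]
      simp
    have hMz : M =ᵐ[P] 0 := by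
      have hall : ∀ᵐ ω ∂P, ∀ i ∈ Q, X i ω = 0 := by
        rw [Filter.eventually_all_finset]
        intro i hi
        filter_upwards [hz i hi] with ω hω using hω
      filter_upwards [hall] with ω hω
      have : Q.sup' hQ (fun i => X i ω) = Q.sup' hQ (fun _ => (0:ℝ)) :=
        Finset.sup'_congr hQ rfl hω
      simp only [hM, Pi.zero_apply, this, Finset.sup'_const]
    rw [integral_congr_ae hMz]
    simp [← hσ0]
  · -- σ > 0
    by_cases hcard : Q.card = 1
    · obtain ⟨i, rfl⟩ := Finset.card_eq_one.mp hcard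
      have : M = X i := by
        funext ω
        simp [hM]
      rw [this, integral_of_map_gaussian (hm i (Finset.mem_singleton_self i))
        (hg i (Finset.mem_singleton_self i))]
      positivity
    · have hcard2 : 2 ≤ Q.card := by
        have := hQ.card_pos
        omega
    
      set L : ℝ := Real.log Q.card with hLdef
      have hL : 0 < L := Real.log_pos (by exact_mod_cast hcard2.trans_lt' one_lt_two)
      set lam : ℝ := Real.sqrt (2 * L) / σ with hlam
      have hlampos : 0 < lam := div_pos (Real.sqrt_pos.mpr (by positivity)) hσpos
      -- pointwise exp bound
      have key : ∀ ω, rexp (lam * M ω) ≤ ∑ i ∈ Q, rexp (lam * X i ω) := by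
        intro ω
        obtain ⟨i₀, hi₀, hEq⟩ := Finset.exists_mem_eq_sup' hQ (fun i => X i ω)
        show rexp (lam * Q.sup' hQ fun i => X i ω) ≤ _
        rw [hEq]
        exact Finset.single_le_sum (f := fun i => rexp (lam * X i ω))
          (fun j _ => (Real.exp_pos _).le) hi₀
      have hexpint : Integrable (fun ω => rexp (lam * M ω)) P := by
        refine (integrable_finset_sum Q (fun i hi =>
          integrable_exp_of_map_gaussian (hm i hi) (hg i hi) lam)).mono'
          (((measurable_exp).comp (hMmeas.const_mul lam)).aestronglyMeasurable) ?_
        filter_upwards with ω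
        rw [Real.norm_eq_abs, abs_of_nonneg (Real.exp_pos _).le]
        exact key ω
      have jensen : rexp (∫ ω, lam * M ω ∂P) ≤ ∫ ω, rexp (lam * M ω) ∂P := by
        exact convexOn_exp.map_integral_le Real.continuous_exp.continuousOn isClosed_univ
          (Filter.Eventually.of_forall fun ω => Set.mem_univ _) (hMint.const_mul lam) hexpint
      have hsum : ∫ ω, rexp (lam * M ω) ∂P ≤ (Q.card : ℝ) * rexp (lam ^ 2 * σ ^ 2 / 2) := by
        calc ∫ ω, rexp (lam * M ω) ∂P ≤ ∫ ω, ∑ i ∈ Q, rexp (lam * X i ω) ∂P := by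
              refine integral_mono hexpint (integrable_finset_sum Q (fun i hi =>
                integrable_exp_of_map_gaussian (hm i hi) (hg i hi) lam)) key
          _ = ∑ i ∈ Q, ∫ ω, rexp (lam * X i ω) ∂P := by
              rw [integral_finset_sum Q (fun i hi =>
                integrable_exp_of_map_gaussian (hm i hi) (hg i hi) lam)]
          _ = ∑ i ∈ Q, rexp (lam ^ 2 * (v i : ℝ) / 2) := by
              refine Finset.sum_congr rfl fun i hi => ?_
              exact integral_exp_of_map_gaussian (hm i hi) (hg i hi) lam
          _ ≤ ∑ i ∈ Q, rexp (lam ^ 2 * σ ^ 2 / 2) := by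
              refine Finset.sum_le_sum fun i hi => ?_
              refine Real.exp_le_exp.mpr ?_
              have := hv i hi
              nlinarith [sq_nonneg lam]
          _ = (Q.card : ℝ) * rexp (lam ^ 2 * σ ^ 2 / 2) := by
              rw [Finset.sum_const, nsmul_eq_mul]
      have hcardpos : (0:ℝ) < (Q.card : ℝ) := by exact_mod_cast hQ.card_pos
      have hchain : lam * ∫ ω, M ω ∂P ≤ L + lam ^ 2 * σ ^ 2 / 2 := by
        have hB : (0:ℝ) < (Q.card : ℝ) * rexp (lam ^ 2 * σ ^ 2 / 2) := by positivity
        have h1 : rexp (lam * ∫ ω, M ω ∂P) ≤ (Q.card : ℝ) * rexp (lam ^ 2 * σ ^ 2 / 2) := by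
          rw [← integral_const_mul]
          exact jensen.trans hsum
        have h2 := (Real.le_log_iff_exp_le hB).mpr h1
        rwa [Real.log_mul (ne_of_gt hcardpos) (Real.exp_ne_zero _), Real.log_exp] at h2
      have hlamsq : lam ^ 2 * σ ^ 2 / 2 = L := by
        rw [hlam, div_pow, Real.sq_sqrt (by positivity : (0:ℝ) ≤ 2 * L)]
        field_simp
      rw [hlamsq] at hchain
      have h2L : Real.sqrt (2 * L) * Real.sqrt (2 * L) = 2 * L :=
        Real.mul_self_sqrt (by positivity)
      have hfinal : (L + L) / lam = σ * Real.sqrt (2 * L) := by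
        rw [hlam]
        rw [div_div_eq_mul_div, div_eq_iff (by positivity : Real.sqrt (2 * L) ≠ 0)]
        nlinarith [h2L]
      have hdiv : ∫ ω, M ω ∂P ≤ (L + L) / lam := by
        rw [le_div_iff₀ hlampos]
        have hcomm : (∫ ω, M ω ∂P) * lam = lam * ∫ ω, M ω ∂P := mul_comm _ _
        linarith
      exact hdiv.trans_eq hfinal

end DudleyAux3

noncomputable def metricEntropy' {T : Type*} (ρ : T → T → ℝ) (η : ℝ) : ℕ∞ :=
  sInf {N : ℕ∞ | ∃ n : ℕ, N = (n : ℕ∞) ∧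
    ∃ c : Fin n → T, ∀ x : T, ∃ i, ρ x (c i) ≤ η}

namespace DudleyAux4

variable {T : Type} [PseudoMetricSpace T] [CompactSpace T] [Nonempty T]

lemma exists_cover (η : ℝ) (hη : 0 < η) :
    ∃ n : ℕ, ∃ c : Fin n → T, ∀ x : T, ∃ i, dist x (c i) ≤ η := by
  obtain ⟨t, ht⟩ := isCompact_univ.elim_finite_subcover (fun x : T => Metric.ball x η)
    (fun x => Metric.isOpen_ball) (by
      intro x _
      exact Set.mem_iUnion.mpr ⟨x, Metric.mem_ball_self hη⟩)
  refine ⟨t.card, fun i => (t.equivFin.symm i : T), fun x => ?_⟩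
  obtain ⟨y, hy⟩ := Set.mem_iUnion.mp (ht (Set.mem_univ x))
  obtain ⟨hyt, hxy⟩ := Set.mem_iUnion.mp hy
  refine ⟨t.equivFin ⟨y, hyt⟩, ?_⟩
  show dist x ((t.equivFin.symm (t.equivFin ⟨y, hyt⟩) : T)) ≤ η
  rw [Equiv.symm_apply_apply]
  exact le_of_lt hxy

lemma entropy_ne_top (η : ℝ) (hη : 0 < η) : metricEntropy' (fun a b : T => dist a b) η ≠ ⊤ := by
  obtain ⟨n, c, hc⟩ := exists_cover (T := T) η hη
  have : metricEntropy' (fun a b : T => dist a b) η ≤ (n : ℕ∞) := sInf_le ⟨n, rfl, c, hc⟩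
  exact ne_top_of_le_ne_top (by simp) this

lemma exists_opt_cover (η : ℝ) (hη : 0 < η) :
    ∃ n : ℕ, (∃ c : Fin n → T, ∀ x : T, ∃ i, dist x (c i) ≤ η) ∧
      (n : ℕ∞) = metricEntropy' (fun a b : T => dist a b) η ∧ 1 ≤ n := by
  set E := metricEntropy' (fun a b : T => dist a b) η with hE
  have hne := entropy_ne_top (T := T) η hη
  rw [← hE] at hne
  have hlt : E < E + 1 := (ENat.lt_add_one_iff hne).mpr le_rfl
  obtain ⟨a, ha, halt⟩ := sInf_lt_iff.mp hlt
  obtain ⟨n, rfl, c, hc⟩ := ha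
  have h1 : E ≤ (n : ℕ∞) := sInf_le ⟨n, rfl, c, hc⟩
  have h2 : (n : ℕ∞) ≤ E := by
    rcases le_or_gt (n : ℕ∞) E with h | h
    · exact h
    · have := Order.add_one_le_of_lt h
      exact absurd halt (not_lt.mpr this)
  refine ⟨n, ⟨c, hc⟩, le_antisymm h2 h1, ?_⟩
  obtain ⟨x⟩ := ‹Nonempty T›
  obtain ⟨i, _⟩ := hc x
  have : 0 < n := i.pos
  omega

lemma entropy_anti : Antitone (metricEntropy' (fun a b : T => dist a b)) := by
  intro η₁ η₂ h
  apply sInf_le_sInf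
  rintro N ⟨n, rfl, c, hc⟩
  exact ⟨n, rfl, c, fun x => (hc x).imp fun i hi => hi.trans h⟩

lemma entropy_toNat_mono {η₁ η₂ : ℝ} (h1 : 0 < η₁) (h : η₁ ≤ η₂) :
    (metricEntropy' (fun a b : T => dist a b) η₂).toNat
      ≤ (metricEntropy' (fun a b : T => dist a b) η₁).toNat :=
  ENat.toNat_le_toNat (entropy_anti h) (entropy_ne_top η₁ h1)

lemma one_le_entropy_toNat {η : ℝ} (hη : 0 < η) :
    1 ≤ (metricEntropy' (fun a b : T => dist a b) η).toNat := by
  obtain ⟨n, _, hn, h1⟩ := exists_opt_cover (T := T) η hη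
  have : (metricEntropy' (fun a b : T => dist a b) η).toNat = n := by
    rw [← hn]
    simp
  omega

end DudleyAux4

namespace DudleyAux5

open DudleyAux3 DudleyAux4

variable {Ω : Type} [MeasurableSpace Ω] {P : Measure Ω} [IsProbabilityMeasure P]
  {T : Type} [PseudoMetricSpace T] [CompactSpace T] [Nonempty T]

lemma chain (G : T → Ω → ℝ) (hGm : ∀ t, Measurable (G t))
    (hgauss : ∀ a b : T, ∃ v : ℝ≥0, (v : ℝ) ≤ dist a b ^ 2 ∧
      Measure.map (fun ω => G a ω - G b ω) P = gaussianReal 0 v)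
    (hI : IntegrableOn (fun η : ℝ =>
      Real.sqrt (Real.log ((metricEntropy' (fun a b : T => dist a b) η).toNat : ℝ)))
      (Set.Ioi (0:ℝ)))
    (S : Finset T) (hS : S.Nonempty) (t₀ : T) (ht₀ : t₀ ∈ S) :
    Integrable (fun ω => S.sup' hS (fun t => G t ω - G t₀ ω)) P ∧
    ∫ ω, S.sup' hS (fun t => G t ω - G t₀ ω) ∂P ≤
      12 * ∫ η in Set.Ioi (0:ℝ),
        Real.sqrt (Real.log ((metricEntropy' (fun a b : T => dist a b) η).toNat : ℝ)) := by
  classical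
  set mE : ℝ → ℕ∞ := metricEntropy' (fun a b : T => dist a b) with hmE
  set h : ℝ → ℝ := fun η => Real.sqrt (Real.log ((mE η).toNat : ℝ)) with hh
  have hhnonneg : ∀ η, 0 ≤ h η := fun η => Real.sqrt_nonneg _
  set I : ℝ := ∫ η in Set.Ioi (0:ℝ), h η with hIdef
  have hInn : 0 ≤ I := setIntegral_nonneg measurableSet_Ioi fun η _ => hhnonneg η
  -- diameter bound
  set D : ℝ := Metric.diam (Set.univ : Set T) + 1 with hD
  have hDpos : 0 < D := by
    have := Metric.diam_nonneg (s := (Set.univ : Set T))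
    linarith
  have hdistD : ∀ a b : T, dist a b ≤ D := fun a b => by
    have := Metric.dist_le_diam_of_mem isCompact_univ.isBounded
      (Set.mem_univ a) (Set.mem_univ b)
    linarith
  -- scales
  set ε : ℕ → ℝ := fun k => D / 2 ^ k with hε
  have hεpos : ∀ k, 0 < ε k := fun k => by positivity
  have hεsucc : ∀ k, ε (k + 1) = ε k / 2 := fun k => by
    simp only [hε, pow_succ]
    ring
  have hεanti : Antitone ε := by
    refine antitone_nat_of_succ_le fun k => ?_
    rw [hεsucc k]
    linarith [hεpos k]
  -- optimal nets
  have hcov : ∀ k : ℕ, ∃ n : ℕ, (∃ c : Fin n → T, ∀ x : T, ∃ i, dist x (c i) ≤ ε k) ∧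
      (n : ℕ∞) = mE (ε k) ∧ 1 ≤ n := fun k => exists_opt_cover (ε k) (hεpos k)
  choose n hex hn hn1 using hcov
  choose c hc using hex
  choose idx hidx using hc
  set prj : ℕ → T → T := fun k => if k = 0 then (fun _ => t₀) else fun x => c k (idx k x)
    with hprj
  have hprj0 : ∀ x, prj 0 x = t₀ := fun x => by simp [hprj]
  have hprjdist : ∀ k x, dist x (prj k x) ≤ ε k := by
    intro k x
    rcases Nat.eq_zero_or_pos k with rfl | hk
    · have : ε 0 = D := by simp [hε]
      rw [this]
      simp only [hprj, if_pos rfl]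
      exact hdistD x t₀
    · simp only [hprj, if_neg (Nat.pos_iff_ne_zero.mp hk)]
      exact hidx k x
  set N : ℕ → ℕ := fun k => (mE (ε k)).toNat with hN
  have hnN : ∀ k, n k = N k := fun k => by
    have h := hn k
    have h2 : N k = (mE (ε k)).toNat := by simp only [hN]
    rw [h2, ← h]
    simp
  have hN1 : ∀ k, 1 ≤ N k := fun k => (hnN k) ▸ hn1 k
  have hNmono : ∀ k, N k ≤ N (k + 1) := fun k =>
    entropy_toNat_mono (hεpos (k+1)) (hεanti (Nat.le_succ k))
  have himg : ∀ k, (S.image (prj k)).card ≤ N k := by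
    intro k
    rcases Nat.eq_zero_or_pos k with rfl | hk
    · have hsub : S.image (prj 0) ⊆ {t₀} := by
        intro x hx
        obtain ⟨t, _, rfl⟩ := Finset.mem_image.mp hx
        simp [hprj0]
      exact (Finset.card_le_card hsub).trans (by simpa using hN1 0)
    · have hsub : S.image (prj k) ⊆ Finset.univ.image (c k) := by
        intro x hx
        obtain ⟨t, _, rfl⟩ := Finset.mem_image.mp hx
        simp only [hprj, if_neg (Nat.pos_iff_ne_zero.mp hk)]
        exact Finset.mem_image_of_mem _ (Finset.mem_univ _)
      refine (Finset.card_le_card hsub).trans ?_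
      refine (Finset.card_image_le).trans ?_
      simp [hnN k]
  -- the increment process
  set X : T × T → Ω → ℝ := fun p ω => G p.1 ω - G p.2 ω with hX
  choose v hvle hvmap using hgauss
  have main : ∀ (Q : Finset (T × T)) (hQ : Q.Nonempty) (σ : ℝ), 0 ≤ σ →
      (∀ p ∈ Q, dist p.1 p.2 ≤ σ) →
      Integrable (fun ω => Q.sup' hQ fun p => X p ω) P ∧
        ∫ ω, Q.sup' hQ (fun p => X p ω) ∂P ≤ σ * Real.sqrt (2 * Real.log Q.card) := by
    intro Q hQ σ hσ hpair
    have hm : ∀ p ∈ Q, Measurable (X p) := fun p _ => (hGm p.1).sub (hGm p.2)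
    have hmap : ∀ p ∈ Q, Measure.map (X p) P = gaussianReal 0 (v p.1 p.2) :=
      fun p _ => hvmap p.1 p.2
    refine ⟨sup'_integrable hQ hm
      (fun p hp => integrable_of_map_gaussian (hm p hp) (hmap p hp)), ?_⟩
    refine expectation_sup'_le hQ hm _ hmap σ hσ fun p hp => ?_
    refine (hvle p.1 p.2).trans ?_
    have h1 := hpair p hp
    nlinarith [dist_nonneg (x := p.1) (y := p.2)]
  -- the level sets and the tail sets
  set Qp : ℕ → Finset (T × T) := fun k => S.image (fun t => (prj (k+1) t, prj k t)) with hQp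
  have hQpne : ∀ k, (Qp k).Nonempty := fun k => hS.image _
  have hQpcard : ∀ k, (Qp k).card ≤ N (k+1) * N (k+1) := by
    intro k
    have hsub : Qp k ⊆ (S.image (prj (k+1))) ×ˢ (S.image (prj k)) := by
      intro p hp
      obtain ⟨t, ht, rfl⟩ := Finset.mem_image.mp hp
      exact Finset.mem_product.mpr
        ⟨Finset.mem_image_of_mem _ ht, Finset.mem_image_of_mem _ ht⟩
    refine (Finset.card_le_card hsub).trans ?_
    rw [Finset.card_product]
    exact Nat.mul_le_mul (himg (k+1)) ((himg k).trans (hNmono k))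
  have hQppair : ∀ k, ∀ p ∈ Qp k, dist p.1 p.2 ≤ 3 * ε (k+1) := by
    intro k p hp
    obtain ⟨t, ht, rfl⟩ := Finset.mem_image.mp hp
    calc dist (prj (k+1) t) (prj k t) ≤ dist (prj (k+1) t) t + dist t (prj k t) := dist_triangle _ _ _
      _ ≤ ε (k+1) + ε k := by
          refine add_le_add ?_ (hprjdist k t)
          rw [dist_comm]
          exact hprjdist (k+1) t
      _ = 3 * ε (k+1) := by
          rw [hεsucc k]
          ring
  set R : ℕ → Finset (T × T) := fun K => S.image (fun t => (t, prj K t)) with hR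
  have hRne : ∀ K, (R K).Nonempty := fun K => hS.image _
  have hRpair : ∀ K, ∀ p ∈ R K, dist p.1 p.2 ≤ ε K := by
    intro K p hp
    obtain ⟨t, ht, rfl⟩ := Finset.mem_image.mp hp
    exact hprjdist K t
  -- the pinned sup is the sup over the diagonal pair set
  set P0 : Finset (T × T) := S.image (fun t => (t, t₀)) with hP0
  have hP0ne : P0.Nonempty := hS.image _
  have hP0eq : ∀ ω, P0.sup' hP0ne (fun p => X p ω)
      = S.sup' hS (fun t => G t ω - G t₀ ω) := by
    intro ω
    apply le_antisymm
    · refine Finset.sup'_le _ _ fun p hp => ?_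
      obtain ⟨t, ht, rfl⟩ := Finset.mem_image.mp hp
      exact Finset.le_sup' (fun t => G t ω - G t₀ ω) ht
    · refine Finset.sup'_le _ _ fun t ht => ?_
      exact Finset.le_sup' (fun p => X p ω)
        (Finset.mem_image_of_mem (fun t => (t, t₀)) ht)
  have hP0pair : ∀ p ∈ P0, dist p.1 p.2 ≤ D := by
    intro p hp
    obtain ⟨t, ht, rfl⟩ := Finset.mem_image.mp hp
    exact hdistD t t₀
  have hLint : Integrable (fun ω => S.sup' hS (fun t => G t ω - G t₀ ω)) P := by
    have := (main P0 hP0ne D hDpos.le hP0pair).1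
    refine this.congr ?_
    filter_upwards with ω using hP0eq ω
  refine ⟨hLint, ?_⟩
  -- pointwise chaining bound
  have hpt : ∀ (K : ℕ) (ω : Ω), S.sup' hS (fun t => G t ω - G t₀ ω) ≤
      (R K).sup' (hRne K) (fun p => X p ω)
        + ∑ k ∈ Finset.range K, (Qp k).sup' (hQpne k) (fun p => X p ω) := by
    intro K ω
    refine Finset.sup'_le _ _ fun t ht => ?_
    have htel : G t ω - G t₀ ω
        = X (t, prj K t) ω + ∑ k ∈ Finset.range K, X (prj (k+1) t, prj k t) ω := by
      have hsum : ∑ k ∈ Finset.range K, (G (prj (k+1) t) ω - G (prj k t) ω)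
          = G (prj K t) ω - G (prj 0 t) ω := Finset.sum_range_sub (fun k => G (prj k t) ω) K
      simp only [hX]
      rw [hsum, hprj0]
      ring
    rw [htel]
    refine add_le_add ?_ ?_
    · exact Finset.le_sup' (fun p => X p ω)
        (Finset.mem_image_of_mem (fun t => (t, prj K t)) ht)
    · exact Finset.sum_le_sum fun k _ =>
        Finset.le_sup' (fun p => X p ω)
          (Finset.mem_image_of_mem (fun t => (prj (k+1) t, prj k t)) ht)
  -- integrate the chaining bound
  have hbound : ∀ K : ℕ, ∫ ω, S.sup' hS (fun t => G t ω - G t₀ ω) ∂P ≤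
      ε K * Real.sqrt (2 * Real.log S.card)
        + ∑ k ∈ Finset.range K, 3 * ε (k+1) * Real.sqrt (2 * Real.log ((Qp k).card)) := by
    intro K
    have hRint := main (R K) (hRne K) (ε K) (hεpos K).le (hRpair K)
    have hQint := fun k => main (Qp k) (hQpne k) (3 * ε (k+1)) (by positivity) (hQppair k)
    calc ∫ ω, S.sup' hS (fun t => G t ω - G t₀ ω) ∂P
        ≤ ∫ ω, ((R K).sup' (hRne K) (fun p => X p ω)
            + ∑ k ∈ Finset.range K, (Qp k).sup' (hQpne k) (fun p => X p ω)) ∂P := by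
          refine integral_mono hLint ?_ fun ω => hpt K ω
          exact hRint.1.add (integrable_finset_sum _ fun k _ => (hQint k).1)
      _ = (∫ ω, (R K).sup' (hRne K) (fun p => X p ω) ∂P)
            + ∑ k ∈ Finset.range K, ∫ ω, (Qp k).sup' (hQpne k) (fun p => X p ω) ∂P := by
          rw [integral_add hRint.1 (integrable_finset_sum _ fun k _ => (hQint k).1),
            integral_finset_sum _ fun k _ => (hQint k).1]
      _ ≤ ε K * Real.sqrt (2 * Real.log S.card)
            + ∑ k ∈ Finset.range K, 3 * ε (k+1) * Real.sqrt (2 * Real.log ((Qp k).card)) := by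
          refine add_le_add ?_ (Finset.sum_le_sum fun k _ => (hQint k).2)
          refine hRint.2.trans ?_
          have hcard : (R K).card ≤ S.card := Finset.card_image_le
          have h1 : (1:ℝ) ≤ ((R K).card : ℝ) := by
            exact_mod_cast (hRne K).card_pos
          refine mul_le_mul_of_nonneg_left ?_ (hεpos K).le
          refine Real.sqrt_le_sqrt ?_
          have : Real.log ((R K).card) ≤ Real.log (S.card) :=
            Real.log_le_log (by linarith) (by exact_mod_cast hcard)
          linarith
  -- compare each level with a piece of the entropy integral
  have hIoc : ∀ a b : ℝ, 0 < a → a ≤ b → (b - a) * h b ≤ ∫ η in Set.Ioc a b, h η := by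
    intro a b ha hab
    have hsub : Set.Ioc a b ⊆ Set.Ioi (0:ℝ) := fun x hx => lt_trans ha hx.1
    have hint : IntegrableOn h (Set.Ioc a b) := hI.mono_set hsub
    have hconst : ∫ _ in Set.Ioc a b, h b = (b - a) * h b := by
      rw [setIntegral_const, Real.volume_real_Ioc_of_le hab, smul_eq_mul]
    rw [← hconst]
    refine setIntegral_mono_on (integrableOn_const ?_) hint measurableSet_Ioc ?_
    · rw [Real.volume_Ioc]
      exact ENNReal.ofReal_lt_top.ne
    · intro η hη
      simp only [hh]
      refine Real.sqrt_le_sqrt (Real.log_le_log ?_ ?_)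
      · have h1 := DudleyAux4.one_le_entropy_toNat (T := T) (lt_of_lt_of_le ha hab)
        rw [hmE]
        have h2 : 0 < (metricEntropy' (fun a b : T => dist a b) b).toNat := h1
        exact_mod_cast h2
      · rw [hmE]
        exact_mod_cast DudleyAux4.entropy_toNat_mono (T := T) (lt_trans ha hη.1) hη.2
  -- level-k bound vs a piece of the entropy integral
  have hlevel : ∀ k : ℕ, 3 * ε (k+1) * Real.sqrt (2 * Real.log ((Qp k).card))
      ≤ 12 * ∫ η in Set.Ioc (ε (k+2)) (ε (k+1)), h η := by
    intro k
    have hcard1 : (1:ℝ) ≤ ((Qp k).card : ℝ) := by exact_mod_cast (hQpne k).card_pos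
    have hN1' : (1:ℝ) ≤ (N (k+1) : ℝ) := by exact_mod_cast hN1 (k+1)
    have hlogN : 0 ≤ Real.log (N (k+1)) := Real.log_nonneg hN1'
    have hlog : Real.log ((Qp k).card) ≤ 2 * Real.log (N (k+1)) := by
      have hle : ((Qp k).card : ℝ) ≤ (N (k+1) : ℝ) ^ 2 := by
        rw [sq]
        exact_mod_cast hQpcard k
      calc Real.log ((Qp k).card) ≤ Real.log ((N (k+1):ℝ) ^ 2) :=
            Real.log_le_log (by linarith) hle
        _ = 2 * Real.log (N (k+1)) := by
            rw [Real.log_pow]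
            push_cast
            ring
    have hsq : Real.sqrt (2 * Real.log ((Qp k).card)) ≤ 2 * Real.sqrt (Real.log (N (k+1))) := by
      have h4 : 2 * Real.log ((Qp k).card) ≤ 2 ^ 2 * Real.log (N (k+1)) := by nlinarith
      refine (Real.sqrt_le_sqrt h4).trans_eq ?_
      rw [Real.sqrt_mul (by positivity), Real.sqrt_sq (by norm_num)]
    have hhval : h (ε (k+1)) = Real.sqrt (Real.log ((N (k+1) : ℝ))) := by
      simp only [hh, hN]
    have hstep := hIoc (ε (k+2)) (ε (k+1)) (hεpos (k+2)) (hεanti (Nat.le_succ (k+1)))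
    have hdiff : ε (k+1) - ε (k+2) = ε (k+1) / 2 := by
      rw [hεsucc (k+1)]
      ring
    calc 3 * ε (k+1) * Real.sqrt (2 * Real.log ((Qp k).card))
        ≤ 3 * ε (k+1) * (2 * Real.sqrt (Real.log (N (k+1)))) :=
          mul_le_mul_of_nonneg_left hsq (by positivity)
      _ = 12 * ((ε (k+1) - ε (k+2)) * h (ε (k+1))) := by
          rw [hdiff, hhval]
          ring
      _ ≤ 12 * ∫ η in Set.Ioc (ε (k+2)) (ε (k+1)), h η := by linarith [hstep]
  -- telescoping the pieces of the integral
  have htel : ∀ K : ℕ, ∑ k ∈ Finset.range K, ∫ η in Set.Ioc (ε (k+2)) (ε (k+1)), h η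
      ≤ ∫ η in Set.Ioc (ε (K+1)) (ε 1), h η := by
    intro K
    induction K with
    | zero => simp
    | succ K ih =>
      rw [Finset.sum_range_succ]
      have hunion : Set.Ioc (ε (K+2)) (ε (K+1)) ∪ Set.Ioc (ε (K+1)) (ε 1)
          = Set.Ioc (ε (K+2)) (ε 1) :=
        Set.Ioc_union_Ioc_eq_Ioc (hεanti (by omega)) (hεanti (by omega))
      have hint1 : IntegrableOn h (Set.Ioc (ε (K+2)) (ε (K+1))) :=
        hI.mono_set fun x hx => lt_trans (hεpos _) hx.1
      have hint2 : IntegrableOn h (Set.Ioc (ε (K+1)) (ε 1)) :=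
        hI.mono_set fun x hx => lt_trans (hεpos _) hx.1
      have hu := setIntegral_union (Set.Ioc_disjoint_Ioc_of_le le_rfl) measurableSet_Ioc hint1 hint2
      rw [hunion] at hu
      have hpos1 : 0 ≤ ∫ η in Set.Ioc (ε (K+2)) (ε (K+1)), h η :=
        setIntegral_nonneg measurableSet_Ioc fun η _ => hhnonneg η
      linarith [ih]
  have htail : ∀ K : ℕ, ∫ η in Set.Ioc (ε (K+1)) (ε 1), h η ≤ I := by
    intro K
    refine setIntegral_mono_set hI ?_ ?_
    · filter_upwards with η using hhnonneg η
    · exact HasSubset.Subset.eventuallyLE (fun x hx => lt_trans (hεpos _) hx.1)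
  have hfin : ∀ K : ℕ, ∫ ω, S.sup' hS (fun t => G t ω - G t₀ ω) ∂P
      ≤ ε K * Real.sqrt (2 * Real.log S.card) + 12 * I := by
    intro K
    refine (hbound K).trans ?_
    refine add_le_add_right ?_ _
    calc ∑ k ∈ Finset.range K, 3 * ε (k+1) * Real.sqrt (2 * Real.log ((Qp k).card))
        ≤ ∑ k ∈ Finset.range K, 12 * ∫ η in Set.Ioc (ε (k+2)) (ε (k+1)), h η :=
          Finset.sum_le_sum fun k _ => hlevel k
      _ = 12 * ∑ k ∈ Finset.range K, ∫ η in Set.Ioc (ε (k+2)) (ε (k+1)), h η := by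
          rw [Finset.mul_sum]
      _ ≤ 12 * I := by
          have := (htel K).trans (htail K)
          linarith
  have hεlim : Tendsto ε atTop (𝓝 0) := by
    have hεeq : ε = fun k => D * (2⁻¹ : ℝ) ^ k := by
      funext k
      rw [hε]
      simp [div_eq_mul_inv, inv_pow]
    rw [hεeq]
    simpa using (tendsto_pow_atTop_nhds_zero_of_lt_one (by norm_num) (by
      norm_num : (2⁻¹ : ℝ) < 1)).const_mul D
  have hlim : Tendsto (fun K => ε K * Real.sqrt (2 * Real.log S.card) + 12 * I) atTop
      (𝓝 (12 * I)) := by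
    have := (hεlim.mul_const (Real.sqrt (2 * Real.log S.card))).add_const (12 * I)
    simpa using this
  exact ge_of_tendsto hlim (Filter.Eventually.of_forall hfin)

end DudleyAux5

namespace DudleyAux6

lemma sup'_eq_add_sup'_sub {ι : Type*} (Q : Finset ι) (hQ : Q.Nonempty) (f : ι → ℝ) (c : ℝ) :
    Q.sup' hQ f = c + Q.sup' hQ (fun i => f i - c) := by
  apply le_antisymm
  · refine Finset.sup'_le _ _ fun i hi => ?_
    have := Finset.le_sup' (fun i => f i - c) hi
    linarith
  · obtain ⟨i₀, hi₀, hEq⟩ := Finset.exists_mem_eq_sup' hQ (fun i => f i - c)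
    rw [hEq]
    have := Finset.le_sup' f hi₀
    linarith

end DudleyAux6

theorem statement18' :
    ∃ K : ℝ, 0 < K ∧
      ∀ (Ω : Type) [MeasurableSpace Ω],
        ∀ (P : Measure Ω), IsProbabilityMeasure P →
        ∀ (T : Type), Nonempty T →
        ∀ (G : T → Ω → ℝ),
        ((∀ t, Measurable (G t)) ∧
          ∀ (n : ℕ) (t : Fin n → T) (a : Fin n → ℝ),
            ∃ v : NNReal, Measure.map (fun ω => ∑ i, a i * G (t i) ω) P = gaussianReal 0 v) →
        ∀ ρ : T → T → ℝ,
          (∀ t₁ t₂, ρ t₁ t₂ = Real.sqrt (∫ ω, (G t₁ ω - G t₂ ω) ^ 2 ∂P)) →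
          ∀ m : PseudoMetricSpace T,
            (∀ t₁ t₂, dist t₁ t₂ = ρ t₁ t₂) →
            CompactSpace T →
            (∀ᵐ ω ∂P, Continuous fun x : T => G x ω) →
            IntegrableOn
              (fun η : ℝ => Real.sqrt (Real.log ((metricEntropy' ρ η).toNat : ℝ)))
              (Set.Ioi (0 : ℝ)) →
            ∫ ω, (⨆ x : T, G x ω) ∂P ≤
              K * ∫ η in Set.Ioi (0 : ℝ),
                Real.sqrt (Real.log ((metricEntropy' ρ η).toNat : ℝ)) := by
  classical
  refine ⟨12, by norm_num, ?_⟩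
  intro Ω _ P hP T hT G hG ρ hρ m hmdist hcomp hcont hInt
  haveI := hP
  haveI := hcomp
  haveI : Nonempty T := hT
  obtain ⟨hGmeas, hGlin⟩ := hG
  have hρdist : ρ = fun a b : T => dist a b := by
    funext a b
    rw [hmdist]
  subst hρdist
  set mE : ℝ → ℕ∞ := metricEntropy' (fun a b : T => dist a b) with hmE
  set h : ℝ → ℝ := fun η => Real.sqrt (Real.log ((mE η).toNat : ℝ)) with hh
  set I : ℝ := ∫ η in Set.Ioi (0:ℝ), h η with hI
  have hInn : 0 ≤ I :=
    setIntegral_nonneg measurableSet_Ioi fun η _ => Real.sqrt_nonneg _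
  -- pairwise Gaussian increments with variance dist²
  have hgauss : ∀ a b : T, ∃ v : ℝ≥0, (v : ℝ) ≤ dist a b ^ 2 ∧
      Measure.map (fun ω => G a ω - G b ω) P = gaussianReal 0 v := by
    intro a b
    obtain ⟨v, hv⟩ := hGlin 2 ![a, b] ![1, -1]
    have hfun : (fun ω => ∑ i, (![1, -1] : Fin 2 → ℝ) i * G ((![a, b] : Fin 2 → T) i) ω)
        = fun ω => G a ω - G b ω := by
      funext ω
      rw [Fin.sum_univ_two]
      simp
      ring
    rw [hfun] at hv
    refine ⟨v, ?_, hv⟩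
    have h2 : ∫ ω, (G a ω - G b ω) ^ 2 ∂P = (v : ℝ) := by
      have hmap := integral_map (μ := P) (φ := fun ω => G a ω - G b ω)
        ((hGmeas a).sub (hGmeas b)).aemeasurable (f := fun y : ℝ => y ^ 2)
        (measurable_id'.pow_const 2).aestronglyMeasurable
      rw [hv, DudleyAux2.integral_sq_gaussian] at hmap
      exact hmap.symm
    have h3 : dist a b ^ 2 = ∫ ω, (G a ω - G b ω) ^ 2 ∂P := by
      rw [hmdist, hρ, Real.sq_sqrt (integral_nonneg fun ω => sq_nonneg _)]
    rw [h3, h2]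
  -- a dense sequence
  have hsepT : TopologicalSpace.SeparableSpace T :=
    TopologicalSpace.isSeparable_univ_iff.mp (isCompact_univ (X := T)).isSeparable
  obtain ⟨s, hs⟩ := TopologicalSpace.exists_dense_seq T
  -- finite approximating sets
  set S : ℕ → Finset T := fun n => (Finset.range (n + 1)).image s with hS
  have hSne : ∀ n, (S n).Nonempty := fun n =>
    ⟨s 0, Finset.mem_image_of_mem s (Finset.mem_range.mpr (Nat.succ_pos n))⟩
  have hs0 : ∀ n, s 0 ∈ S n := fun n =>
    Finset.mem_image_of_mem s (Finset.mem_range.mpr (Nat.succ_pos n))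
  have hSmono : ∀ {a b : ℕ}, a ≤ b → S a ⊆ S b := by
    intro a b hab
    apply Finset.image_subset_image
    intro x hx
    rw [Finset.mem_range] at hx ⊢
    omega
  -- G (s 0) is centered Gaussian
  have hGs0 : ∃ v : ℝ≥0, Measure.map (G (s 0)) P = gaussianReal 0 v := by
    obtain ⟨v, hv⟩ := hGlin 1 ![s 0] ![1]
    refine ⟨v, ?_⟩
    have hfun : (fun ω => ∑ i, (![1] : Fin 1 → ℝ) i * G ((![s 0] : Fin 1 → T) i) ω)
        = G (s 0) := by
      funext ω
      simp
    rwa [hfun] at hv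
  obtain ⟨v0, hv0⟩ := hGs0
  have hGs0int : Integrable (G (s 0)) P :=
    DudleyAux3.integrable_of_map_gaussian (hGmeas (s 0)) hv0
  have hGs0zero : ∫ ω, G (s 0) ω ∂P = 0 :=
    DudleyAux3.integral_of_map_gaussian (hGmeas (s 0)) hv0
  -- the chaining bound for each finite stage
  have hchain := fun n => DudleyAux5.chain (P := P) G hGmeas hgauss hInt
    (S n) (hSne n) (s 0) (hs0 n)
  set F : ℕ → Ω → ℝ := fun n ω => (S n).sup' (hSne n) (fun t => G t ω) with hF
  have hFsplit : ∀ n, F n = fun ω =>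
      G (s 0) ω + (S n).sup' (hSne n) (fun t => G t ω - G (s 0) ω) := by
    intro n
    funext ω
    exact DudleyAux6.sup'_eq_add_sup'_sub (S n) (hSne n) _ _
  have hFint : ∀ n, Integrable (F n) P := by
    intro n
    rw [hFsplit n]
    exact hGs0int.add (hchain n).1
  have hFbound : ∀ n, ∫ ω, F n ω ∂P ≤ 12 * I := by
    intro n
    rw [hFsplit n]
    rw [integral_add hGs0int (hchain n).1, hGs0zero, zero_add]
    exact (hchain n).2
  by_cases hsupint : Integrable (fun ω => ⨆ x : T, G x ω) P
  · -- monotone convergence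
    have hmono : ∀ ω, Monotone fun n => F n ω := by
      intro ω a b hab
      exact Finset.sup'_mono _ (hSmono hab) (hSne a)
    have htend : ∀ᵐ ω ∂P, Tendsto (fun n => F n ω) atTop (𝓝 (⨆ x : T, G x ω)) := by
      filter_upwards [hcont] with ω hω
      have hbdd : BddAbove (Set.range fun x : T => G x ω) := by
        rw [← Set.image_univ]
        exact (isCompact_univ.image hω).bddAbove
      have hle : ∀ n, F n ω ≤ ⨆ x : T, G x ω := by
        intro n
        refine Finset.sup'_le _ _ fun t _ => ?_
        exact le_ciSup hbdd t
      have hFbdd : BddAbove (Set.range fun n => F n ω) := by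
        refine ⟨⨆ x : T, G x ω, ?_⟩
        rintro y ⟨n, rfl⟩
        exact hle n
      have h1 : Tendsto (fun n => F n ω) atTop (𝓝 (⨆ n, F n ω)) :=
        tendsto_atTop_ciSup (fun a b hab => hmono ω hab) hFbdd
      have h2 : (⨆ n, F n ω) = ⨆ x : T, G x ω := by
        apply le_antisymm
        · exact ciSup_le hle
        · refine ciSup_le fun x => ?_
          have hx : x ∈ closure (Set.range s) := hs x
          obtain ⟨u, hu_mem, hu_lim⟩ := mem_closure_iff_seq_limit.mp hx
          have hcomp2 : Tendsto (fun j => G (u j) ω) atTop (𝓝 (G x ω)) :=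
            (hω.tendsto x).comp hu_lim
          refine le_of_tendsto hcomp2 ?_
          filter_upwards with j
          obtain ⟨mj, hmj⟩ := hu_mem j
          have h4 : G (u j) ω ≤ F mj ω := by
            rw [← hmj]
            refine Finset.le_sup' (fun t => G t ω)
              (Finset.mem_image_of_mem s (Finset.mem_range.mpr (by omega)))
          exact h4.trans (le_ciSup hFbdd mj)
      rwa [h2] at h1
    have hlim := integral_tendsto_of_tendsto_of_monotone hFint hsupint
      (Filter.Eventually.of_forall hmono) htend
    exact le_of_tendsto hlim (Filter.Eventually.of_forall hFbound)
  · rw [integral_undef hsupint]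
    positivity

/-- Dudley's entropy bound: there is a universal constant `K > 0` such
that for every centered Gaussian process `(G(t))_{t∈T}` with canonical pseudometric
`ρ(t₁,t₂) = (𝐄[(G(t₁)−G(t₂))²])^{1/2}`, with `(T,ρ)` compact and almost surely
`ρ`-continuous sample paths, if `∫₀^∞ √(log 𝒩(η)) dη < ∞` then
`𝐄[sup_{t∈T} G(t)] ≤ K ∫₀^∞ √(log 𝒩(η)) dη`. -/
theorem statement18 :
    ∃ K : ℝ, 0 < K ∧
      ∀ (Ω : Type) [MeasurableSpace Ω],
        ∀ (P : Measure Ω), IsProbabilityMeasure P →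
        ∀ (T : Type), Nonempty T →
        ∀ (G : T → Ω → ℝ), IsCenteredGaussianProcess P G →
        ∀ ρ : T → T → ℝ,
          (∀ t₁ t₂, ρ t₁ t₂ = Real.sqrt (∫ ω, (G t₁ ω - G t₂ ω) ^ 2 ∂P)) →
          ∀ m : PseudoMetricSpace T,
            (∀ t₁ t₂, dist t₁ t₂ = ρ t₁ t₂) →
            CompactSpace T →
            (∀ᵐ ω ∂P, Continuous fun x : T => G x ω) →
            IntegrableOn
              (fun η : ℝ => Real.sqrt (Real.log ((metricEntropy ρ η).toNat : ℝ)))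
              (Set.Ioi (0 : ℝ)) →
            ∫ ω, (⨆ x : T, G x ω) ∂P ≤
              K * ∫ η in Set.Ioi (0 : ℝ),
                Real.sqrt (Real.log ((metricEntropy ρ η).toNat : ℝ)) := by
  have hmEeq : @metricEntropy = @metricEntropy' := rfl
  obtain ⟨K, hK, hmain⟩ := statement18'
  refine ⟨K, hK, ?_⟩
  intro Ω _ P hP T hT G hG ρ hρ m hm hcomp hcont hInt
  rw [hmEeq] at hInt ⊢
  exact hmain Ω P hP T hT G hG ρ hρ m hm hcomp hcont hInt
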